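/- Short-time theorem for the exciton-polariton system, regime B with α = 0 and C₁ = 0: with initial data φ(0) = φ̃(0) = φ₀ (‖φ₀‖_{H^s} = M), ψ(0) = ψ̃(0) = 0, where φ̃ solves the linear exciton system B, the relative error satisfies ‖φ̃(t) − φ(t)‖_{H^s}/‖φ(t)‖_{H^s} ≤ (1/(p+2))|g|K_p γ^{p+1} M^{p−1} C₂^{p+2} ε + o(ε) for 0 ≤ t ≤ C₂ε^{1/(p+2)}, as ε → 0. -/

import Mathlib

/-!
The norms `a = ‖φ‖`, `b = ‖ψ‖`, `h = ‖φ̃ - φ‖`, `z = ‖ψ̃ - ψ‖` satisfy a closed system of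
integral inequalities (`DuhamelComparison`), because both propagators are contractions and
`‖N u‖ ≤ K_p ‖u‖^p`. On `[0, δ]` a continuity argument keeps `b` below `2γMδ`, hence `b t ≤ L t`
with `L → γM` and `a ≥ M - O(δ²)`. Inserting `b^p ≤ (L t)^p` into the error inequalities and
integrating twice gives `h ≤ 2/(p+1) · c γ L^p δ^(p+2)/(p+2)` with `c = |g| K_p`; since `p > 1`,
the factor `2/(p+1) < 1` absorbs every small-`δ` correction, so for `δ = C₂ ε^(1/(p+2))` small the
bound holds with no error term at all.
-/

open Set MeasureTheory Filter Topology intervalIntegral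

theorem ContinuousOn.forall_lt_of_forall_Ico_le_imp_lt {f : ℝ → ℝ} {a b K : ℝ}
    (hf : ContinuousOn f (Icc a b))
    (h : ∀ s ∈ Icc a b, (∀ τ ∈ Ico a s, f τ ≤ K) → f s < K) :
    ∀ t ∈ Icc a b, f t < K := by
  by_contra! hex
  obtain ⟨t, ht, hKt⟩ := hex
  set A := Icc a b ∩ f ⁻¹' Ici K
  have hA : IsClosed A := hf.preimage_isClosed_of_isClosed isClosed_Icc isClosed_Ici
  have hbdd : BddBelow A := ⟨a, fun x hx => hx.1.1⟩
  have hmem : sInf A ∈ A := hA.csInf_mem ⟨t, ht, hKt⟩ hbdd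
  refine (h _ hmem.1 fun τ hτ => ?_).not_ge hmem.2
  by_contra! hτK
  exact hτ.2.not_ge (csInf_le hbdd ⟨⟨hτ.1, hτ.2.le.trans hmem.1.2⟩, hτK.le⟩)

theorem ContinuousOn.intervalIntegrable_of_mem_Icc {E : Type*} [NormedAddCommGroup E]
    {f : ℝ → E} {a b t : ℝ} (hf : ContinuousOn f (Icc a b)) (ht : t ∈ Icc a b) :
    IntervalIntegrable f volume a t :=
  (hf.mono (Icc_subset_Icc_right ht.2)).intervalIntegrable_of_Icc ht.1

theorem integral_le_mul_of_forall_Ioo_le {f : ℝ → ℝ} {a b K : ℝ} (hab : a ≤ b)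
    (hf : IntervalIntegrable f volume a b) (h : ∀ τ ∈ Ioo a b, f τ ≤ K) :
    ∫ τ in a..b, f τ ≤ (b - a) * K := by
  simpa using integral_mono_on_of_le_Ioo hab hf intervalIntegrable_const h

theorem integral_rpow_from_zero {r t : ℝ} (hr : -1 < r) :
    ∫ x in (0:ℝ)..t, x ^ r = t ^ (r + 1) / (r + 1) := by
  rw [integral_rpow (Or.inl hr), Real.zero_rpow (by linarith), sub_zero]

theorem tendsto_const_mul_rpow_nhdsGT_zero (C : ℝ) {r : ℝ} (hr : 0 < r) :
    Tendsto (fun ε : ℝ => C * ε ^ r) (𝓝[>] 0) (𝓝 0) := by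
  have := ((Real.continuousAt_rpow_const 0 r (Or.inr hr.le)).tendsto).const_mul C
  rw [Real.zero_rpow hr.ne', mul_zero] at this
  exact this.mono_left nhdsWithin_le_nhds

theorem mul_rpow_one_div_rpow {C ε q : ℝ} (hC : 0 ≤ C) (hε : 0 ≤ ε) (hq : q ≠ 0) :
    (C * ε ^ (1 / q)) ^ q = C ^ q * ε := by
  rw [Real.mul_rpow hC (by positivity), ← Real.rpow_mul hε, one_div_mul_cancel hq, Real.rpow_one]

-- On `[0, δ]`, `‖ψ‖` stays below `bootstrapBound`, and then grows at most like `slopeBound * t`.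
def bootstrapBound (γ M δ : ℝ) : ℝ := 2 * γ * M * δ

noncomputable def slopeBound (γ M c p δ : ℝ) : ℝ :=
  γ * (M + γ * δ * bootstrapBound γ M δ) + c * bootstrapBound γ M δ ^ p

theorem bootstrapBound_nonneg {γ M δ : ℝ} (hγ : 0 ≤ γ) (hM : 0 ≤ M) (hδ : 0 ≤ δ) :
    0 ≤ bootstrapBound γ M δ := by
  unfold bootstrapBound; positivity

theorem slopeBound_nonneg {γ M c p δ : ℝ} (hγ : 0 ≤ γ) (hM : 0 ≤ M) (hc : 0 ≤ c) (hδ : 0 ≤ δ) :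
    0 ≤ slopeBound γ M c p δ := by
  have := bootstrapBound_nonneg hγ hM hδ
  unfold slopeBound; positivity

structure SmallTime (γ M c p δ : ℝ) : Prop where
  slope_lt : slopeBound γ M c p δ < 2 * γ * M
  sq_le : (γ * δ) ^ 2 ≤ 1 / 2
  rpow_le : 2 * γ * slopeBound γ M c p δ ^ p / (p + 1)
    ≤ γ ^ (p + 1) * M ^ (p - 1) * (M - γ * δ * bootstrapBound γ M δ)

theorem eventually_smallTime {γ M c p : ℝ} (hγ : 0 < γ) (hM : 0 < M) (hp : 1 < p) :
    ∀ᶠ δ in 𝓝 0, SmallTime γ M c p δ := by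
  have hp0 : 0 ≤ p := by linarith
  have hcont : Continuous (slopeBound γ M c p) := by
    unfold slopeBound bootstrapBound
    fun_prop (disch := exact hp0)
  have h0 : slopeBound γ M c p 0 = γ * M := by
    simp [slopeBound, bootstrapBound, Real.zero_rpow (by linarith : p ≠ 0)]
  have hγM : γ * (γ * M) ^ p = γ ^ (p + 1) * M ^ (p - 1) * M := by
    rw [Real.mul_rpow hγ.le hM.le, Real.rpow_add_one hγ.ne', Real.rpow_sub_one hM.ne']
    field_simp
  have hslope : ∀ᶠ δ in 𝓝 0, slopeBound γ M c p δ < 2 * γ * M :=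
    hcont.continuousAt.eventually_lt continuousAt_const (by rw [h0]; nlinarith)
  have hsq : ∀ᶠ δ in 𝓝 (0:ℝ), (γ * δ) ^ 2 < 1 / 2 :=
    (by fun_prop : Continuous fun δ : ℝ => (γ * δ) ^ 2).continuousAt.eventually_lt
      continuousAt_const (by norm_num)
  have hrpow : ∀ᶠ δ in 𝓝 0, 2 * γ * slopeBound γ M c p δ ^ p / (p + 1)
      < γ ^ (p + 1) * M ^ (p - 1) * (M - γ * δ * bootstrapBound γ M δ) := by
    refine ContinuousAt.eventually_lt (by fun_prop (disch := exact hp0))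
      (by unfold bootstrapBound; fun_prop) ?_
    have hpos : 0 < γ * (γ * M) ^ p := by positivity
    simp only [h0, bootstrapBound, mul_zero, sub_zero]
    rw [← hγM, div_lt_iff₀ (by linarith)]
    nlinarith
  filter_upwards [hslope, hsq, hrpow] with δ h1 h2 h3
  exact ⟨h1, h2.le, h3.le⟩

structure DuhamelComparison (γ M c p δ : ℝ) (a b h z : ℝ → ℝ) : Prop where
  continuousOn_a : ContinuousOn a (Icc 0 δ)
  continuousOn_b : ContinuousOn b (Icc 0 δ)
  continuousOn_h : ContinuousOn h (Icc 0 δ)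
  continuousOn_z : ContinuousOn z (Icc 0 δ)
  b_nonneg : ∀ t ∈ Icc 0 δ, 0 ≤ b t
  h_nonneg : ∀ t ∈ Icc 0 δ, 0 ≤ h t
  abs_a_sub_le : ∀ t ∈ Icc 0 δ, |a t - M| ≤ γ * ∫ τ in (0:ℝ)..t, b τ
  b_le : ∀ t ∈ Icc 0 δ, b t ≤ γ * (∫ τ in (0:ℝ)..t, a τ) + c * ∫ τ in (0:ℝ)..t, b τ ^ p
  h_le : ∀ t ∈ Icc 0 δ, h t ≤ γ * ∫ τ in (0:ℝ)..t, z τ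
  z_le : ∀ t ∈ Icc 0 δ, z t ≤ γ * (∫ τ in (0:ℝ)..t, h τ) + c * ∫ τ in (0:ℝ)..t, b τ ^ p

namespace DuhamelComparison

variable {γ M c p δ : ℝ} {a b h z : ℝ → ℝ}

theorem integral_b_le (S : DuhamelComparison γ M c p δ a b h z) {s K : ℝ} (hs : s ∈ Icc 0 δ)
    (hbK : ∀ τ ∈ Ioo 0 s, b τ ≤ K) : ∫ τ in (0:ℝ)..s, b τ ≤ s * K := by
  simpa using integral_le_mul_of_forall_Ioo_le hs.1
    (S.continuousOn_b.intervalIntegrable_of_mem_Icc hs) hbK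

theorem b_le_mul_of_forall_Ico_le (S : DuhamelComparison γ M c p δ a b h z) (hγ : 0 ≤ γ)
    (hc : 0 ≤ c) (hp : 0 ≤ p) {s K : ℝ} (hK : 0 ≤ K) (hs : s ∈ Icc 0 δ)
    (hbK : ∀ τ ∈ Ico 0 s, b τ ≤ K) :
    b s ≤ s * (γ * (M + γ * δ * K) + c * K ^ p) := by
  have hsub : Ioo 0 s ⊆ Icc 0 δ := fun τ hτ => ⟨hτ.1.le, hτ.2.le.trans hs.2⟩
  have ha : ∀ τ ∈ Ioo 0 s, a τ ≤ M + γ * δ * K := fun τ hτ => by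
    have hτδ := hsub hτ
    have hb : ∫ σ in (0:ℝ)..τ, b σ ≤ τ * K :=
      S.integral_b_le hτδ fun σ hσ => hbK σ ⟨hσ.1.le, hσ.2.trans hτ.2⟩
    have := (le_abs_self _).trans (S.abs_a_sub_le τ hτδ)
    nlinarith [mul_le_mul_of_nonneg_left hb hγ, mul_le_mul_of_nonneg_right hτδ.2 hK,
      mul_le_mul_of_nonneg_left (mul_le_mul_of_nonneg_right hτδ.2 hK) hγ]
  have hbp : ∀ τ ∈ Ioo 0 s, b τ ^ p ≤ K ^ p := fun τ hτ =>
    Real.rpow_le_rpow (S.b_nonneg τ (hsub hτ)) (hbK τ ⟨hτ.1.le, hτ.2⟩) hp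
  have hia := integral_le_mul_of_forall_Ioo_le hs.1
    (S.continuousOn_a.intervalIntegrable_of_mem_Icc hs) ha
  have hibp := integral_le_mul_of_forall_Ioo_le hs.1
    ((S.continuousOn_b.rpow_const fun _ _ => Or.inr hp).intervalIntegrable_of_mem_Icc hs) hbp
  rw [sub_zero] at hia hibp
  calc b s ≤ γ * (∫ τ in (0:ℝ)..s, a τ) + c * ∫ τ in (0:ℝ)..s, b τ ^ p := S.b_le s hs
    _ ≤ γ * (s * (M + γ * δ * K)) + c * (s * K ^ p) := by gcongr
    _ = s * (γ * (M + γ * δ * K) + c * K ^ p) := by ring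

theorem b_lt_bootstrapBound (S : DuhamelComparison γ M c p δ a b h z) (hγ : 0 ≤ γ) (hM : 0 ≤ M)
    (hc : 0 ≤ c) (hp : 0 ≤ p) (hδ : 0 < δ) (hL : slopeBound γ M c p δ < 2 * γ * M) :
    ∀ t ∈ Icc 0 δ, b t < bootstrapBound γ M δ := by
  have hK := bootstrapBound_nonneg hγ hM hδ.le
  have hL0 := slopeBound_nonneg (p := p) hγ hM hc hδ.le
  refine S.continuousOn_b.forall_lt_of_forall_Ico_le_imp_lt fun s hs hbK => ?_
  calc b s ≤ s * slopeBound γ M c p δ := S.b_le_mul_of_forall_Ico_le hγ hc hp hK hs hbK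
    _ ≤ δ * slopeBound γ M c p δ := by gcongr; exact hs.2
    _ < δ * (2 * γ * M) := by gcongr
    _ = bootstrapBound γ M δ := by unfold bootstrapBound; ring

theorem integral_rpow_b_le (S : DuhamelComparison γ M c p δ a b h z) (hp : 0 ≤ p) {L : ℝ}
    (hL : 0 ≤ L) (hbL : ∀ t ∈ Icc 0 δ, b t ≤ L * t) {s : ℝ} (hs : s ∈ Icc 0 δ) :
    ∫ τ in (0:ℝ)..s, b τ ^ p ≤ L ^ p * (s ^ (p + 1) / (p + 1)) := by
  have hmono : ∫ τ in (0:ℝ)..s, b τ ^ p ≤ ∫ τ in (0:ℝ)..s, L ^ p * τ ^ p := by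
    refine integral_mono_on_of_le_Ioo hs.1
      ((S.continuousOn_b.rpow_const fun _ _ => Or.inr hp).intervalIntegrable_of_mem_Icc hs)
      ((continuous_const.mul (Real.continuous_rpow_const hp)).intervalIntegrable _ _)
      fun τ hτ => ?_
    have hτ' : τ ∈ Icc 0 δ := ⟨hτ.1.le, hτ.2.le.trans hs.2⟩
    rw [← Real.mul_rpow hL hτ.1.le]
    exact Real.rpow_le_rpow (S.b_nonneg τ hτ') (hbL τ hτ') hp
  rwa [intervalIntegral.integral_const_mul, integral_rpow_from_zero (by linarith)] at hmono

theorem z_le_of_forall_h_le (S : DuhamelComparison γ M c p δ a b h z) (hγ : 0 ≤ γ) (hc : 0 ≤ c)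
    (hp : 0 ≤ p) {H L : ℝ} (hH0 : 0 ≤ H) (hH : ∀ t ∈ Icc 0 δ, h t ≤ H) (hL : 0 ≤ L)
    (hbL : ∀ t ∈ Icc 0 δ, b t ≤ L * t) :
    ∀ s ∈ Icc 0 δ, z s ≤ γ * δ * H + c * L ^ p / (p + 1) * s ^ (p + 1) := by
  intro s hs
  have hih : ∫ τ in (0:ℝ)..s, h τ ≤ s * H := by
    simpa using integral_le_mul_of_forall_Ioo_le hs.1
      (S.continuousOn_h.intervalIntegrable_of_mem_Icc hs)
      fun τ hτ => hH τ ⟨hτ.1.le, hτ.2.le.trans hs.2⟩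
  calc z s ≤ γ * (∫ τ in (0:ℝ)..s, h τ) + c * ∫ τ in (0:ℝ)..s, b τ ^ p := S.z_le s hs
    _ ≤ γ * (δ * H) + c * (L ^ p * (s ^ (p + 1) / (p + 1))) := by
      gcongr
      · exact hih.trans (mul_le_mul_of_nonneg_right hs.2 hH0)
      · exact S.integral_rpow_b_le hp hL hbL hs
    _ = γ * δ * H + c * L ^ p / (p + 1) * s ^ (p + 1) := by ring

theorem h_le_of_forall_h_le (S : DuhamelComparison γ M c p δ a b h z) (hγ : 0 ≤ γ) (hc : 0 ≤ c)
    (hp : 0 ≤ p) {H L : ℝ} (hH0 : 0 ≤ H) (hH : ∀ t ∈ Icc 0 δ, h t ≤ H) (hL : 0 ≤ L)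
    (hbL : ∀ t ∈ Icc 0 δ, b t ≤ L * t) :
    ∀ t ∈ Icc 0 δ, h t ≤ (γ * δ) ^ 2 * H + γ * c * L ^ p * δ ^ (p + 2) / ((p + 1) * (p + 2)) := by
  intro t ⟨ht0, htδ⟩
  have hpow : IntervalIntegrable (fun τ : ℝ => c * L ^ p / (p + 1) * τ ^ (p + 1)) volume 0 t :=
    (continuous_const.mul (Real.continuous_rpow_const (by linarith))).intervalIntegrable _ _
  have hiz : ∫ τ in (0:ℝ)..t, z τ
      ≤ ∫ τ in (0:ℝ)..t, (γ * δ * H + c * L ^ p / (p + 1) * τ ^ (p + 1)) :=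
    integral_mono_on_of_le_Ioo ht0 (S.continuousOn_z.intervalIntegrable_of_mem_Icc ⟨ht0, htδ⟩)
      (intervalIntegrable_const.add hpow) fun τ hτ =>
        S.z_le_of_forall_h_le hγ hc hp hH0 hH hL hbL τ ⟨hτ.1.le, hτ.2.le.trans htδ⟩
  rw [integral_add intervalIntegrable_const hpow, intervalIntegral.integral_const,
    intervalIntegral.integral_const_mul, integral_rpow_from_zero (by linarith), smul_eq_mul,
    sub_zero, show p + 1 + 1 = p + 2 by ring] at hiz
  have hδ : 0 ≤ δ := ht0.trans htδ
  calc h t ≤ γ * ∫ τ in (0:ℝ)..t, z τ := S.h_le t ⟨ht0, htδ⟩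
    _ ≤ γ * (t * (γ * δ * H) + c * L ^ p / (p + 1) * (t ^ (p + 2) / (p + 2))) := by gcongr
    _ ≤ γ * (δ * (γ * δ * H) + c * L ^ p / (p + 1) * (δ ^ (p + 2) / (p + 2))) := by gcongr
    _ = (γ * δ) ^ 2 * H + γ * c * L ^ p * δ ^ (p + 2) / ((p + 1) * (p + 2)) := by field_simp

theorem h_le_of_b_le_mul (S : DuhamelComparison γ M c p δ a b h z) (hγ : 0 ≤ γ) (hc : 0 ≤ c)
    (hp : 0 ≤ p) (hδ : 0 ≤ δ) (hγδ : (γ * δ) ^ 2 ≤ 1 / 2) {L : ℝ} (hL : 0 ≤ L)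
    (hbL : ∀ t ∈ Icc 0 δ, b t ≤ L * t) :
    ∀ t ∈ Icc 0 δ, h t ≤ 2 * γ * c * L ^ p * δ ^ (p + 2) / ((p + 1) * (p + 2)) := by
  obtain ⟨t₁, ht₁, hmax⟩ := isCompact_Icc.exists_isMaxOn ⟨0, le_rfl, hδ⟩ S.continuousOn_h
  have hH0 : 0 ≤ h t₁ := S.h_nonneg t₁ ht₁
  have hH := S.h_le_of_forall_h_le hγ hc hp hH0 (fun t ht => hmax ht) hL hbL t₁ ht₁
  intro t ht
  calc h t ≤ h t₁ := hmax ht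
    _ ≤ 2 * (γ * c * L ^ p * δ ^ (p + 2) / ((p + 1) * (p + 2))) := by
      linarith [mul_le_mul_of_nonneg_right hγδ hH0]
    _ = 2 * γ * c * L ^ p * δ ^ (p + 2) / ((p + 1) * (p + 2)) := by ring

theorem sub_mul_le_a (S : DuhamelComparison γ M c p δ a b h z) (hγ : 0 ≤ γ) {K : ℝ} (hK : 0 ≤ K)
    (hbK : ∀ t ∈ Icc 0 δ, b t ≤ K) : ∀ t ∈ Icc 0 δ, M - γ * δ * K ≤ a t := by
  intro t ht
  have hb : ∫ τ in (0:ℝ)..t, b τ ≤ t * K :=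
    S.integral_b_le ht fun τ hτ => hbK τ ⟨hτ.1.le, hτ.2.le.trans ht.2⟩
  have := neg_le_of_abs_le (S.abs_a_sub_le t ht)
  nlinarith [mul_le_mul_of_nonneg_left hb hγ,
    mul_le_mul_of_nonneg_left (mul_le_mul_of_nonneg_right ht.2 hK) hγ]

theorem h_le_mul_a_of_smallTime (S : DuhamelComparison γ M c p δ a b h z) (hγ : 0 ≤ γ)
    (hM : 0 ≤ M) (hc : 0 ≤ c) (hp : 1 < p) (hδ : 0 ≤ δ) (hsmall : SmallTime γ M c p δ) :
    ∀ t ∈ Icc 0 δ, h t ≤ 1 / (p + 2) * c * γ ^ (p + 1) * M ^ (p - 1) * δ ^ (p + 2) * a t := by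
  intro t ht
  have hp0 : 0 ≤ p := by linarith
  rcases hδ.eq_or_lt with rfl | hδ
  · obtain rfl : t = 0 := le_antisymm ht.2 ht.1
    simpa [Real.zero_rpow (by linarith : p + 2 ≠ 0)] using S.h_le 0 ht
  set K := bootstrapBound γ M δ
  set L := slopeBound γ M c p δ
  have hK : 0 ≤ K := bootstrapBound_nonneg hγ hM hδ.le
  have hL : 0 ≤ L := slopeBound_nonneg hγ hM hc hδ.le
  have hbK := S.b_lt_bootstrapBound hγ hM hc hp0 hδ hsmall.slope_lt
  have hbL : ∀ s ∈ Icc 0 δ, b s ≤ L * s := fun s hs => by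
    rw [mul_comm]
    exact S.b_le_mul_of_forall_Ico_le hγ hc hp0 hK hs fun τ hτ =>
      (hbK τ ⟨hτ.1, hτ.2.le.trans hs.2⟩).le
  calc h t ≤ 2 * γ * c * L ^ p * δ ^ (p + 2) / ((p + 1) * (p + 2)) :=
        S.h_le_of_b_le_mul hγ hc hp0 hδ.le hsmall.sq_le hL hbL t ht
    _ = c * δ ^ (p + 2) / (p + 2) * (2 * γ * L ^ p / (p + 1)) := by
        field_simp
    _ ≤ c * δ ^ (p + 2) / (p + 2) * (γ ^ (p + 1) * M ^ (p - 1) * (M - γ * δ * K)) := by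
        gcongr; exact hsmall.rpow_le
    _ ≤ c * δ ^ (p + 2) / (p + 2) * (γ ^ (p + 1) * M ^ (p - 1) * a t) := by
        gcongr; exact S.sub_mul_le_a hγ hK (fun s hs => (hbK s hs).le) t ht
    _ = 1 / (p + 2) * c * γ ^ (p + 1) * M ^ (p - 1) * δ ^ (p + 2) * a t := by ring

end DuhamelComparison

section Duhamel

variable {E : Type*} [NormedAddCommGroup E] [NormedSpace ℂ E]

theorem norm_I_mul_ofReal (x : ℝ) : ‖Complex.I * x‖ = |x| := by
  rw [norm_mul, Complex.norm_I, one_mul, Complex.norm_real, Real.norm_eq_abs]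

theorem norm_I_mul_smul_integral_le {F : ℝ → E} {f : ℝ → ℝ} {γ t : ℝ} (hγ : 0 ≤ γ)
    (ht : 0 ≤ t) (hF : ∀ τ, ‖F τ‖ ≤ f τ) (hf : IntervalIntegrable f volume 0 t) :
    ‖(Complex.I * γ) • ∫ τ in (0:ℝ)..t, F τ‖ ≤ γ * ∫ τ in (0:ℝ)..t, f τ := by
  rw [norm_smul, norm_I_mul_ofReal, abs_of_nonneg hγ]
  exact mul_le_mul_of_nonneg_left
    (norm_integral_le_of_norm_le ht (ae_of_all _ fun τ _ => hF τ) hf) hγ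

theorem norm_I_mul_smul_integral_le_of_le_add {F : ℝ → E} {f : ℝ → ℝ} {γ t C : ℝ}
    (hγ : 0 ≤ γ) (ht : 0 ≤ t) (hγt : γ * t ≤ 1) (hC : 0 ≤ C) (hF : ∀ τ, ‖F τ‖ ≤ f τ + C)
    (hf : IntervalIntegrable f volume 0 t) :
    ‖(Complex.I * γ) • ∫ τ in (0:ℝ)..t, F τ‖ ≤ γ * (∫ τ in (0:ℝ)..t, f τ) + C := by
  refine (norm_I_mul_smul_integral_le hγ ht hF (hf.add intervalIntegrable_const)).trans ?_
  rw [integral_add hf intervalIntegrable_const, intervalIntegral.integral_const, smul_eq_mul,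
    sub_zero]
  nlinarith [mul_le_mul_of_nonneg_right hγt hC]

theorem abs_norm_sub_norm_le_of_duhamel (U : ℝ → E →ₗᵢ[ℂ] E) {x x₀ : E} {y : ℝ → E}
    {γ t : ℝ} (hγ : 0 ≤ γ) (ht : 0 ≤ t) (hy : IntervalIntegrable (fun τ => ‖y τ‖) volume 0 t)
    (hx : x = U t x₀ - (Complex.I * γ) • ∫ τ in (0:ℝ)..t, U (t - τ) (y τ)) :
    |‖x‖ - ‖x₀‖| ≤ γ * ∫ τ in (0:ℝ)..t, ‖y τ‖ := by
  rw [← (U t).norm_map x₀]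
  refine (abs_norm_sub_norm_le _ _).trans ?_
  rw [hx, sub_sub_cancel_left, norm_neg]
  exact norm_I_mul_smul_integral_le hγ ht (fun τ => ((U (t - τ)).norm_map _).le) hy

theorem norm_sub_le_of_duhamel (U : ℝ → E →ₗᵢ[ℂ] E) {x x' x₀ : E} {y y' : ℝ → E}
    {γ t : ℝ} (hγ : 0 ≤ γ) (ht : 0 ≤ t)
    (hUy : IntervalIntegrable (fun τ => U (t - τ) (y τ)) volume 0 t)
    (hUy' : IntervalIntegrable (fun τ => U (t - τ) (y' τ)) volume 0 t)
    (hy : IntervalIntegrable (fun τ => ‖y' τ - y τ‖) volume 0 t)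
    (hx : x = U t x₀ - (Complex.I * γ) • ∫ τ in (0:ℝ)..t, U (t - τ) (y τ))
    (hx' : x' = U t x₀ - (Complex.I * γ) • ∫ τ in (0:ℝ)..t, U (t - τ) (y' τ)) :
    ‖x' - x‖ ≤ γ * ∫ τ in (0:ℝ)..t, ‖y' τ - y τ‖ := by
  have hdiff : x' - x = (Complex.I * γ) • ∫ τ in (0:ℝ)..t, U (t - τ) (y τ - y' τ) := by
    simp_rw [hx, hx', map_sub, integral_sub hUy hUy', smul_sub]
    abel
  rw [hdiff]
  refine norm_I_mul_smul_integral_le hγ ht (fun τ => ?_) hy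
  rw [(U (t - τ)).norm_map, norm_sub_rev]

variable {S : ℝ → ℂ} {N : E → E} {Kp p : ℝ}

theorem norm_integral_smul_le_of_norm_le (hS : ∀ s, ‖S s‖ ≤ 1)
    (hN : ∀ u, ‖N u‖ ≤ Kp * ‖u‖ ^ p) {w : ℝ → E} {t : ℝ} (ht : 0 ≤ t)
    (hw : IntervalIntegrable (fun τ => ‖w τ‖ ^ p) volume 0 t) :
    ‖∫ σ in (0:ℝ)..t, S (t - σ) • N (w σ)‖ ≤ Kp * ∫ σ in (0:ℝ)..t, ‖w σ‖ ^ p := by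
  rw [← intervalIntegral.integral_const_mul]
  refine norm_integral_le_of_norm_le ht (ae_of_all _ fun σ _ => ?_) (hw.const_mul Kp)
  exact (norm_smul_le _ _).trans ((mul_le_of_le_one_left (norm_nonneg _) (hS _)).trans (hN _))

theorem norm_smul_sub_I_mul_smul_le (hS : ∀ s, ‖S s‖ ≤ 1) (s g : ℝ) (v J : E) :
    ‖S s • v - (Complex.I * g) • J‖ ≤ ‖v‖ + |g| * ‖J‖ := by
  refine (norm_sub_le _ _).trans (add_le_add ?_ ?_)
  · exact (norm_smul_le _ _).trans (mul_le_of_le_one_left (norm_nonneg _) (hS _))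
  · rw [norm_smul, norm_I_mul_ofReal]

-- In the Duhamel formula for `ψ` the inner integral does not depend on `τ`, so it enters with a
-- factor `t`; the hypothesis `γ * t ≤ 1` absorbs it.
theorem norm_le_of_duhamel_phase (hS : ∀ s, ‖S s‖ ≤ 1) (hN : ∀ u, ‖N u‖ ≤ Kp * ‖u‖ ^ p)
    {x : E} {φ w : ℝ → E} {γ g t : ℝ} (hγ : 0 ≤ γ) (ht : 0 ≤ t) (hγt : γ * t ≤ 1)
    (hφ : IntervalIntegrable (fun τ => ‖φ τ‖) volume 0 t)
    (hw : IntervalIntegrable (fun τ => ‖w τ‖ ^ p) volume 0 t)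
    (hx : x = -(Complex.I * γ) • ∫ τ in (0:ℝ)..t,
      (S (t - τ) • φ τ - (Complex.I * g) • ∫ σ in (0:ℝ)..t, S (t - σ) • N (w σ))) :
    ‖x‖ ≤ γ * (∫ τ in (0:ℝ)..t, ‖φ τ‖) + |g| * Kp * ∫ τ in (0:ℝ)..t, ‖w τ‖ ^ p := by
  rw [hx, neg_smul, norm_neg, mul_assoc |g|]
  refine (norm_I_mul_smul_integral_le_of_le_add hγ ht hγt (by positivity)
    (fun τ => norm_smul_sub_I_mul_smul_le hS _ g _ _) hφ).trans ?_
  gcongr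
  exact norm_integral_smul_le_of_norm_le hS hN ht hw

theorem norm_sub_le_of_duhamel_phase (hS : ∀ s, ‖S s‖ ≤ 1) (hN : ∀ u, ‖N u‖ ≤ Kp * ‖u‖ ^ p)
    {x x' : E} {φ φ' w : ℝ → E} {γ g t : ℝ} (hγ : 0 ≤ γ) (ht : 0 ≤ t) (hγt : γ * t ≤ 1)
    (hSφ : IntervalIntegrable (fun τ => S (t - τ) • φ τ) volume 0 t)
    (hSφ' : IntervalIntegrable (fun τ => S (t - τ) • φ' τ) volume 0 t)
    (hφ : IntervalIntegrable (fun τ => ‖φ' τ - φ τ‖) volume 0 t)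
    (hw : IntervalIntegrable (fun τ => ‖w τ‖ ^ p) volume 0 t)
    (hx : x = -(Complex.I * γ) • ∫ τ in (0:ℝ)..t,
      (S (t - τ) • φ τ - (Complex.I * g) • ∫ σ in (0:ℝ)..t, S (t - σ) • N (w σ)))
    (hx' : x' = -(Complex.I * γ) • ∫ τ in (0:ℝ)..t, S (t - τ) • φ' τ) :
    ‖x' - x‖ ≤ γ * (∫ τ in (0:ℝ)..t, ‖φ' τ - φ τ‖) + |g| * Kp * ∫ τ in (0:ℝ)..t, ‖w τ‖ ^ p := by
  set J := ∫ σ in (0:ℝ)..t, S (t - σ) • N (w σ)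
  have hdiff : x' - x = (Complex.I * γ) • ∫ τ in (0:ℝ)..t,
      ((S (t - τ) • φ τ - (Complex.I * g) • J) - S (t - τ) • φ' τ) := by
    rw [integral_sub (hSφ.sub intervalIntegrable_const) hSφ', hx, hx', smul_sub, neg_smul,
      neg_smul]
    abel
  rw [hdiff, mul_assoc |g|]
  refine (norm_I_mul_smul_integral_le_of_le_add (C := |g| * ‖J‖) hγ ht hγt (by positivity)
    (fun τ => ?_) hφ).trans ?_
  · rw [sub_right_comm, ← smul_sub, norm_sub_rev (φ' τ)]
    exact norm_smul_sub_I_mul_smul_le hS _ g _ _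
  gcongr
  exact norm_integral_smul_le_of_norm_le hS hN ht hw

end Duhamel

theorem DuhamelComparison.of_duhamel {E : Type*} [NormedAddCommGroup E] [NormedSpace ℂ E]
    (U : ℝ → E →ₗᵢ[ℂ] E) {S : ℝ → ℂ} (hS : ∀ s, ‖S s‖ ≤ 1) (hSc : Continuous S)
    {N : E → E} {Kp p : ℝ} (hN : ∀ u, ‖N u‖ ≤ Kp * ‖u‖ ^ p) (hp : 0 ≤ p)
    {γ g T δ : ℝ} (hγ : 0 ≤ γ) (hδT : δ ≤ T) (hγδ : γ * δ ≤ 1)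
    {φ₀ : E} {φ ψ φt ψt : ℝ → E}
    (hφc : ContinuousOn φ (Icc 0 T)) (hψc : ContinuousOn ψ (Icc 0 T))
    (hφtc : ContinuousOn φt (Icc 0 T)) (hψtc : ContinuousOn ψt (Icc 0 T))
    (hIntU : ∀ t ∈ Icc (0:ℝ) T,
      IntervalIntegrable (fun τ => U (t - τ) (ψ τ)) volume 0 t ∧
      IntervalIntegrable (fun τ => U (t - τ) (ψt τ)) volume 0 t)
    (hφ : ∀ t ∈ Icc (0:ℝ) T,
      φ t = U t φ₀ - (Complex.I * γ) • ∫ τ in (0:ℝ)..t, U (t - τ) (ψ τ))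
    (hψ : ∀ t ∈ Icc (0:ℝ) T,
      ψ t = -(Complex.I * γ) • ∫ τ in (0:ℝ)..t,
        (S (t - τ) • φ τ - (Complex.I * g) • ∫ σ in (0:ℝ)..t, S (t - σ) • N (ψ σ)))
    (hφt : ∀ t ∈ Icc (0:ℝ) T,
      φt t = U t φ₀ - (Complex.I * γ) • ∫ τ in (0:ℝ)..t, U (t - τ) (ψt τ))
    (hψt : ∀ t ∈ Icc (0:ℝ) T,
      ψt t = -(Complex.I * γ) • ∫ τ in (0:ℝ)..t, S (t - τ) • φt τ) :
    DuhamelComparison γ ‖φ₀‖ (|g| * Kp) p δ (fun t => ‖φ t‖) (fun t => ‖ψ t‖)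
      (fun t => ‖φt t - φ t‖) (fun t => ‖ψt t - ψ t‖) := by
  have hsub : Icc 0 δ ⊆ Icc 0 T := Icc_subset_Icc_right hδT
  have hγt : ∀ t ∈ Icc 0 δ, γ * t ≤ 1 := fun t ht => (mul_le_mul_of_nonneg_left ht.2 hγ).trans hγδ
  have hψp : ContinuousOn (fun t => ‖ψ t‖ ^ p) (Icc 0 T) := hψc.norm.rpow_const fun _ _ => Or.inr hp
  have hSφ : ∀ {f : ℝ → E}, ContinuousOn f (Icc 0 T) → ∀ t ∈ Icc 0 δ,
      IntervalIntegrable (fun τ => S (t - τ) • f τ) volume 0 t := fun hf t ht =>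
    ((hSc.comp (continuous_const.sub continuous_id)).continuousOn.smul hf
      ).intervalIntegrable_of_mem_Icc (hsub ht)
  refine ⟨hφc.norm.mono hsub, hψc.norm.mono hsub, (hφtc.sub hφc).norm.mono hsub,
    (hψtc.sub hψc).norm.mono hsub, fun _ _ => norm_nonneg _, fun _ _ => norm_nonneg _,
    fun t ht => ?_, fun t ht => ?_, fun t ht => ?_, fun t ht => ?_⟩
  · exact abs_norm_sub_norm_le_of_duhamel U hγ ht.1
      (hψc.norm.intervalIntegrable_of_mem_Icc (hsub ht)) (hφ t (hsub ht))
  · exact norm_le_of_duhamel_phase hS hN hγ ht.1 (hγt t ht)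
      (hφc.norm.intervalIntegrable_of_mem_Icc (hsub ht))
      (hψp.intervalIntegrable_of_mem_Icc (hsub ht)) (hψ t (hsub ht))
  · exact norm_sub_le_of_duhamel U hγ ht.1 (hIntU t (hsub ht)).1 (hIntU t (hsub ht)).2
      ((hψtc.sub hψc).norm.intervalIntegrable_of_mem_Icc (hsub ht)) (hφ t (hsub ht))
      (hφt t (hsub ht))
  · exact norm_sub_le_of_duhamel_phase hS hN hγ ht.1 (hγt t ht) (hSφ hφc t ht) (hSφ hφtc t ht)
      ((hφtc.sub hφc).norm.intervalIntegrable_of_mem_Icc (hsub ht))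
      (hψp.intervalIntegrable_of_mem_Icc (hsub ht)) (hψ t (hsub ht)) (hψt t (hsub ht))

theorem stmt16_general {E : Type*} [NormedAddCommGroup E] [NormedSpace ℂ E]
    (p γ g ω₀ Kp M C₂ T : ℝ) (hp : 1 < p) (hγ : 0 < γ) (hKp : 0 ≤ Kp)
    (hM : 0 < M) (hC₂ : 0 ≤ C₂)
    (U : ℝ → E →ₗᵢ[ℂ] E) (N : E → E) (hN : ∀ u : E, ‖N u‖ ≤ Kp * ‖u‖ ^ p)
    (φ₀ : E) (hφ₀ : ‖φ₀‖ = M)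
    (φ ψ φt ψt : ℝ → ℝ → E)
    (hφc : ∀ ε ∈ Ioo (0:ℝ) 1, ContinuousOn (φ ε) (Icc 0 T))
    (hψc : ∀ ε ∈ Ioo (0:ℝ) 1, ContinuousOn (ψ ε) (Icc 0 T))
    (hφtc : ∀ ε ∈ Ioo (0:ℝ) 1, ContinuousOn (φt ε) (Icc 0 T))
    (hψtc : ∀ ε ∈ Ioo (0:ℝ) 1, ContinuousOn (ψt ε) (Icc 0 T))
    (hIntU : ∀ ε ∈ Ioo (0:ℝ) 1, ∀ t ∈ Icc (0:ℝ) T,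
      IntervalIntegrable (fun τ => U (t - τ) (ψ ε τ)) volume 0 t ∧
      IntervalIntegrable (fun τ => U (t - τ) (ψt ε τ)) volume 0 t)
    -- the nonlinear exciton-polariton system, in Duhamel form
    (hDuhφ : ∀ ε ∈ Ioo (0:ℝ) 1, ∀ t ∈ Icc (0:ℝ) T,
      φ ε t = U t φ₀
        - (Complex.I * (γ : ℂ)) • ∫ τ in (0:ℝ)..t, U (t - τ) (ψ ε τ))
    (hDuhψ : ∀ ε ∈ Ioo (0:ℝ) 1, ∀ t ∈ Icc (0:ℝ) T,
      ψ ε t = -(Complex.I * (γ : ℂ)) • ∫ τ in (0:ℝ)..t,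
              Complex.exp (-(Complex.I) * (ω₀ : ℂ) * ((t - τ : ℝ) : ℂ)) • φ ε τ
            - (Complex.I * (g : ℂ)) • ∫ τ in (0:ℝ)..t,
              Complex.exp (-(Complex.I) * (ω₀ : ℂ) * ((t - τ : ℝ) : ℂ)) • N (ψ ε τ))
    -- the linear exciton system B, in Duhamel form
    (hDuhφt : ∀ ε ∈ Ioo (0:ℝ) 1, ∀ t ∈ Icc (0:ℝ) T,
      φt ε t = U t φ₀
        - (Complex.I * (γ : ℂ)) • ∫ τ in (0:ℝ)..t, U (t - τ) (ψt ε τ))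
    (hDuhψt : ∀ ε ∈ Ioo (0:ℝ) 1, ∀ t ∈ Icc (0:ℝ) T,
      ψt ε t = -(Complex.I * (γ : ℂ)) • ∫ τ in (0:ℝ)..t,
              Complex.exp (-(Complex.I) * (ω₀ : ℂ) * ((t - τ : ℝ) : ℂ)) • φt ε τ) :
    ∃ err : ℝ → ℝ, Tendsto (fun ε => err ε / ε) (nhdsWithin 0 (Ioi 0)) (nhds 0) ∧
      ∃ ε₀ > (0:ℝ), ∀ ε : ℝ, 0 < ε → ε < ε₀ → ε < 1 →
        C₂ * ε ^ (1 / (p + 2)) ≤ T →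
        ∀ t ∈ Icc (0:ℝ) (C₂ * ε ^ (1 / (p + 2))),
          ‖φt ε t - φ ε t‖
            ≤ (1 / (p + 2) * |g| * Kp * γ ^ (p + 1) * M ^ (p - 1) * C₂ ^ (p + 2) * ε
                + err ε) * ‖φ ε t‖ := by
  have hp2 : 0 < p + 2 := by linarith
  obtain ⟨ε₀, hε₀, hsmall⟩ := (nhdsGT_basis (0:ℝ)).eventually_iff.1
    ((tendsto_const_mul_rpow_nhdsGT_zero C₂ (r := 1 / (p + 2)) (by positivity)).eventually
      (eventually_smallTime (c := |g| * Kp) hγ hM hp))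
  refine ⟨fun _ => 0, by simp, ε₀, hε₀, fun ε hε hεε₀ hε1 hδT t ht => ?_⟩
  have hε' : ε ∈ Ioo (0:ℝ) 1 := ⟨hε, hε1⟩
  set δ := C₂ * ε ^ (1 / (p + 2))
  have hsmallδ : SmallTime γ M (|g| * Kp) p δ := hsmall ⟨hε, hεε₀⟩
  have hδ0 : 0 ≤ δ := by positivity
  have hγδ : γ * δ ≤ 1 := by nlinarith [hsmallδ.sq_le, mul_nonneg hγ.le hδ0]
  have hphase : ∀ s : ℝ, ‖Complex.exp (-(Complex.I) * ω₀ * s)‖ ≤ 1 := fun s => by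
    simp [Complex.norm_exp]
  have hcomp := DuhamelComparison.of_duhamel U hphase (by fun_prop) hN (by linarith) hγ.le hδT
    hγδ (hφc ε hε') (hψc ε hε') (hφtc ε hε') (hψtc ε hε') (hIntU ε hε') (hDuhφ ε hε')
    (hDuhψ ε hε') (hDuhφt ε hε') (hDuhψt ε hε')
  rw [hφ₀] at hcomp
  have key := hcomp.h_le_mul_a_of_smallTime hγ.le hM.le (by positivity) hp hδ0 hsmallδ t ht
  rw [mul_rpow_one_div_rpow hC₂ hε.le hp2.ne'] at key
  calc _ ≤ _ := key
    _ = _ := by ring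

/-- Short-time theorem for the exciton-polariton system, regime B with `α = 0`, `C₁ = 0`:
with data `φ(0) = φ̃(0) = φ₀` (`‖φ₀‖ = M`), `ψ(0) = ψ̃(0) = 0`, where `(φ̃, ψ̃)` solves the
linear exciton system B, the relative error satisfies
`‖φ̃(t) − φ(t)‖/‖φ(t)‖ ≤ (1/(p+2))|g|K_p γ^{p+1} M^{p−1} C₂^{p+2} ε + o(ε)` for
`0 ≤ t ≤ C₂ ε^{1/(p+2)}`, as `ε → 0`.  Abstract setting: `E = H^s(ℝⁿ)`, `s > n/2`;
`U t = e^{itΔ}` isometric; `N u = |u|^{p−1}u` with `‖N u‖ ≤ K_p‖u‖^p`; both systems are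
given in Duhamel form, with solutions depending on `ε`. -/
theorem stmt16 {E : Type*} [NormedAddCommGroup E] [NormedSpace ℂ E] [CompleteSpace E]
    (p γ g ω₀ Kp M C₂ T : ℝ) (hp : 1 < p) (hγ : 0 < γ) (hKp : 0 ≤ Kp)
    (hM : 0 < M) (hC₂ : 0 ≤ C₂) (hT : 0 < T)
    (U : ℝ → E →ₗᵢ[ℂ] E) (N : E → E) (hN : ∀ u : E, ‖N u‖ ≤ Kp * ‖u‖ ^ p)
    (φ₀ : E) (hφ₀ : ‖φ₀‖ = M)
    (φ ψ φt ψt : ℝ → ℝ → E)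
    (hφc : ∀ ε ∈ Ioo (0:ℝ) 1, ContinuousOn (φ ε) (Icc 0 T))
    (hψc : ∀ ε ∈ Ioo (0:ℝ) 1, ContinuousOn (ψ ε) (Icc 0 T))
    (hφtc : ∀ ε ∈ Ioo (0:ℝ) 1, ContinuousOn (φt ε) (Icc 0 T))
    (hψtc : ∀ ε ∈ Ioo (0:ℝ) 1, ContinuousOn (ψt ε) (Icc 0 T))
    (hIntU : ∀ ε ∈ Ioo (0:ℝ) 1, ∀ t ∈ Icc (0:ℝ) T,
      IntervalIntegrable (fun τ => U (t - τ) (ψ ε τ)) volume 0 t ∧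
      IntervalIntegrable (fun τ => U (t - τ) (ψt ε τ)) volume 0 t)
    -- the nonlinear exciton-polariton system, in Duhamel form
    (hDuhφ : ∀ ε ∈ Ioo (0:ℝ) 1, ∀ t ∈ Icc (0:ℝ) T,
      φ ε t = U t φ₀
        - (Complex.I * (γ : ℂ)) • ∫ τ in (0:ℝ)..t, U (t - τ) (ψ ε τ))
    (hDuhψ : ∀ ε ∈ Ioo (0:ℝ) 1, ∀ t ∈ Icc (0:ℝ) T,
      ψ ε t = -(Complex.I * (γ : ℂ)) • ∫ τ in (0:ℝ)..t,
              Complex.exp (-(Complex.I) * (ω₀ : ℂ) * ((t - τ : ℝ) : ℂ)) • φ ε τ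
            - (Complex.I * (g : ℂ)) • ∫ τ in (0:ℝ)..t,
              Complex.exp (-(Complex.I) * (ω₀ : ℂ) * ((t - τ : ℝ) : ℂ)) • N (ψ ε τ))
    -- the linear exciton system B, in Duhamel form
    (hDuhφt : ∀ ε ∈ Ioo (0:ℝ) 1, ∀ t ∈ Icc (0:ℝ) T,
      φt ε t = U t φ₀
        - (Complex.I * (γ : ℂ)) • ∫ τ in (0:ℝ)..t, U (t - τ) (ψt ε τ))
    (hDuhψt : ∀ ε ∈ Ioo (0:ℝ) 1, ∀ t ∈ Icc (0:ℝ) T,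
      ψt ε t = -(Complex.I * (γ : ℂ)) • ∫ τ in (0:ℝ)..t,
              Complex.exp (-(Complex.I) * (ω₀ : ℂ) * ((t - τ : ℝ) : ℂ)) • φt ε τ) :
    ∃ err : ℝ → ℝ, Tendsto (fun ε => err ε / ε) (nhdsWithin 0 (Ioi 0)) (nhds 0) ∧
      ∃ ε₀ > (0:ℝ), ∀ ε : ℝ, 0 < ε → ε < ε₀ → ε < 1 →
        C₂ * ε ^ (1 / (p + 2)) ≤ T →
        ∀ t ∈ Icc (0:ℝ) (C₂ * ε ^ (1 / (p + 2))),
          ‖φt ε t - φ ε t‖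
            ≤ (1 / (p + 2) * |g| * Kp * γ ^ (p + 1) * M ^ (p - 1) * C₂ ^ (p + 2) * ε
                + err ε) * ‖φ ε t‖ :=
  stmt16_general p γ g ω₀ Kp M C₂ T hp hγ hKp hM hC₂ U N hN φ₀ hφ₀ φ ψ φt ψt hφc hψc hφtc hψtc hIntU
    hDuhφ hDuhψ hDuhφt hDuhψt
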